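/- arXiv:1512.09354 — 2 statements merged into one kernel-verified Lean document; each statement's English description precedes it below -/
import Mathlib

section
/- Let δ > 0, η > 0, 0 < P_min ≤ P_max, let F be a finite set of facilities with fading coefficients a_{ku} ∈ [0,1] for k ∈ F towards a user u, and suppose k ∈ F\{f} is a superinterferer for user u served by facility f, i.e. a_{fu}·P_max − δ·a_{ku}·P_min < δ·η. Then there is no power vector p : F → ℝ with p_j ≥ 0 for all j, p_f ≤ P_max and p_k ≥ P_min that satisfies the SIR inequality a_{fu}·p_f − δ·Σ_{j ∈ F\{f}} a_{ju}·p_j ≥ δ·η. Consequently, in any solution in which facility k is activated as a wireless transmitter (so that its power satisfies P_min ≤ p_k ≤ P_max) and all powers satisfy 0 ≤ p_j ≤ P_max, user u cannot be wirelessly served by f, i.e. the superinterferer inequality y_{fu} ≤ 1 − z_k is valid. -/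
/-- If `k` is a superinterferer for user `u` served by facility `f`, then no
power vector within the bounds (with `k` active, i.e. `p k ≥ Pmin`) satisfies
the SIR inequality; consequently the superinterferer inequality
`y_{fu} ≤ 1 - z_k` is valid. -/
theorem superinterferer_inequality_valid
    {ι : Type*} [DecidableEq ι] (F : Finset ι) (f k : ι)
    (hf : f ∈ F) (hk : k ∈ F.erase f)
    (δ η Pmin Pmax : ℝ) (hδ : 0 < δ) (hη : 0 < η)
    (hPmin : 0 < Pmin) (hPP : Pmin ≤ Pmax)
    (a : ι → ℝ) (ha : ∀ j ∈ F, 0 ≤ a j ∧ a j ≤ 1)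
    (hsuper : a f * Pmax - δ * (a k * Pmin) < δ * η) :
    (¬ ∃ p : ι → ℝ, (∀ j ∈ F, 0 ≤ p j) ∧ p f ≤ Pmax ∧ Pmin ≤ p k ∧
        a f * p f - δ * ∑ j ∈ F.erase f, a j * p j ≥ δ * η) ∧
    (∀ (p : ι → ℝ) (y z : ℤ),
        (y = 0 ∨ y = 1) → (z = 0 ∨ z = 1) →
        (∀ j ∈ F, 0 ≤ p j ∧ p j ≤ Pmax) →
        (z = 1 → Pmin ≤ p k ∧ p k ≤ Pmax) →
        (y = 1 → a f * p f - δ * ∑ j ∈ F.erase f, a j * p j ≥ δ * η) →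
        y ≤ 1 - z) := by
  have key : ∀ p : ι → ℝ, (∀ j ∈ F, 0 ≤ p j) → p f ≤ Pmax → Pmin ≤ p k →
      ¬ (a f * p f - δ * ∑ j ∈ F.erase f, a j * p j ≥ δ * η) := by
    intro p hnn hpf hpk hsir
    have hkF : k ∈ F := Finset.mem_of_mem_erase hk
    have haf := ha f hf
    have hak := ha k hkF
    have hsum : a k * p k ≤ ∑ j ∈ F.erase f, a j * p j := by
      apply Finset.single_le_sum (f := fun j => a j * p j) _ hk
      intro j hj
      exact mul_nonneg (ha j (Finset.mem_of_mem_erase hj)).1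
        (hnn j (Finset.mem_of_mem_erase hj))
    have h1 : a f * p f ≤ a f * Pmax := mul_le_mul_of_nonneg_left hpf haf.1
    have h2 : a k * Pmin ≤ a k * p k := mul_le_mul_of_nonneg_left hpk hak.1
    have : a f * p f - δ * ∑ j ∈ F.erase f, a j * p j ≤
        a f * Pmax - δ * (a k * Pmin) := by
      have := mul_le_mul_of_nonneg_left (h2.trans hsum) hδ.le
      linarith
    linarith
  constructor
  · rintro ⟨p, hnn, hpf, hpk, hsir⟩
    exact key p hnn hpf hpk hsir
  · intro p y z hy hz hb hzk hysir
    rcases hz with hz0 | hz1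
    · rcases hy with h | h <;> simp [h, hz0]
    · rcases hy with h | h
      · simp [h, hz1]
      · exfalso
        exact key p (fun j hj => (hb j hj).1) (hb f hf).2 (hzk hz1).1 (hysir h)
end

section
/- Let δ > 0, η > 0, 0 < P_min ≤ P_max, let F be a finite set of facilities, let u₁, u₂ be users and f₁ ≠ f₂ two facilities in F with fading coefficients a_{k,u} ∈ [0,1]. Suppose there is no pair (p₁, p₂) ∈ [P_min, P_max]² satisfying simultaneously the two-facility SIR constraints a_{f₁u₁}·p₁ − δ·a_{f₂u₁}·p₂ ≥ δ·η and a_{f₂u₂}·p₂ − δ·a_{f₁u₂}·p₁ ≥ δ·η. Then for any nonnegative power vector p : F → ℝ with P_min ≤ p_{f₁}, p_{f₂} ≤ P_max, the full SIR inequalities a_{f₁u₁}·p_{f₁} − δ·Σ_{k ∈ F\{f₁}} a_{k,u₁}·p_k ≥ δ·η and a_{f₂u₂}·p_{f₂} − δ·Σ_{k ∈ F\{f₂}} a_{k,u₂}·p_k ≥ δ·η cannot both hold; hence the conflict inequality y_{f₁u₁} + y_{f₂u₂} ≤ 1 is valid, i.e. user u₁ cannot be wirelessly served by f₁ while user u₂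 is wirelessly served by f₂. -/
/-- If the two-facility SIR constraints for `(u₁, f₁)` and `(u₂, f₂)` admit no
common feasible power pair within the bounds, then the two full SIR
inequalities cannot both hold for any feasible power vector, and hence the
conflict inequality `y_{f₁u₁} + y_{f₂u₂} ≤ 1` is valid. -/
theorem conflict_inequality_valid
    {ι υ : Type*} [DecidableEq ι] (F : Finset ι) (f₁ f₂ : ι) (u₁ u₂ : υ)
    (hf₁ : f₁ ∈ F) (hf₂ : f₂ ∈ F) (hne : f₁ ≠ f₂)
    (δ η Pmin Pmax : ℝ) (hδ : 0 < δ) (hη : 0 < η)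
    (hPmin : 0 < Pmin) (hPP : Pmin ≤ Pmax)
    (a : ι → υ → ℝ) (ha : ∀ k ∈ F, ∀ u, 0 ≤ a k u ∧ a k u ≤ 1)
    (hconf : ¬ ∃ p₁ p₂ : ℝ, Pmin ≤ p₁ ∧ p₁ ≤ Pmax ∧ Pmin ≤ p₂ ∧ p₂ ≤ Pmax ∧
        a f₁ u₁ * p₁ - δ * (a f₂ u₁ * p₂) ≥ δ * η ∧
        a f₂ u₂ * p₂ - δ * (a f₁ u₂ * p₁) ≥ δ * η) :
    (∀ p : ι → ℝ, (∀ k ∈ F, 0 ≤ p k) →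
        Pmin ≤ p f₁ → p f₁ ≤ Pmax → Pmin ≤ p f₂ → p f₂ ≤ Pmax →
        ¬ (a f₁ u₁ * p f₁ - δ * ∑ k ∈ F.erase f₁, a k u₁ * p k ≥ δ * η ∧
           a f₂ u₂ * p f₂ - δ * ∑ k ∈ F.erase f₂, a k u₂ * p k ≥ δ * η)) ∧
    (∀ (p : ι → ℝ) (y₁ y₂ : ℤ),
        (y₁ = 0 ∨ y₁ = 1) → (y₂ = 0 ∨ y₂ = 1) →
        (∀ k ∈ F, 0 ≤ p k) →
        Pmin ≤ p f₁ → p f₁ ≤ Pmax → Pmin ≤ p f₂ → p f₂ ≤ Pmax →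
        (y₁ = 1 → a f₁ u₁ * p f₁ - δ * ∑ k ∈ F.erase f₁, a k u₁ * p k ≥ δ * η) →
        (y₂ = 1 → a f₂ u₂ * p f₂ - δ * ∑ k ∈ F.erase f₂, a k u₂ * p k ≥ δ * η) →
        y₁ + y₂ ≤ 1) := by
  have key : ∀ p : ι → ℝ, (∀ k ∈ F, 0 ≤ p k) →
      Pmin ≤ p f₁ → p f₁ ≤ Pmax → Pmin ≤ p f₂ → p f₂ ≤ Pmax →
      ¬ (a f₁ u₁ * p f₁ - δ * ∑ k ∈ F.erase f₁, a k u₁ * p k ≥ δ * η ∧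
         a f₂ u₂ * p f₂ - δ * ∑ k ∈ F.erase f₂, a k u₂ * p k ≥ δ * η) := by
    intro p hp h1 h2 h3 h4 ⟨hS1, hS2⟩
    have hterm : ∀ (u : υ) (k : ι), k ∈ F → 0 ≤ a k u * p k := fun u k hk =>
      mul_nonneg (ha k hk u).1 (hp k hk)
    have hsum1 : a f₂ u₁ * p f₂ ≤ ∑ k ∈ F.erase f₁, a k u₁ * p k :=
      Finset.single_le_sum (fun k hk => hterm u₁ k (Finset.mem_of_mem_erase hk))
        (Finset.mem_erase.mpr ⟨hne.symm, hf₂⟩)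
    have hsum2 : a f₁ u₂ * p f₁ ≤ ∑ k ∈ F.erase f₂, a k u₂ * p k :=
      Finset.single_le_sum (fun k hk => hterm u₂ k (Finset.mem_of_mem_erase hk))
        (Finset.mem_erase.mpr ⟨hne, hf₁⟩)
    exact hconf ⟨p f₁, p f₂, h1, h2, h3, h4, by nlinarith, by nlinarith⟩
  refine ⟨key, ?_⟩
  intro p y₁ y₂ hy₁ hy₂ hp h1 h2 h3 h4 hi₁ hi₂
  rcases hy₁ with rfl | rfl <;> rcases hy₂ with rfl | rfl <;> try norm_num
  exact absurd ⟨hi₁ rfl, hi₂ rfl⟩ (key p hp h1 h2 h3 h4)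
end
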